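/- Let G₁ be a connected simple graph with vertex set {v₁,…,v_n} and diameter exactly 3, and let k ≥ 1 be an integer. Let G₂ be the graph obtained from G₁ by adding, for each i ∈ {1,…,n}, 2k new vertices A_i = {a_{i,1},…,a_{i,k}} and B_i = {b_{i,1},…,b_{i,k}}, where a_{i,p} is adjacent to b_{i,q} if and only if p ≠ q, the vertex v_i is adjacent to every vertex of A_i, and finally adding one further new vertex v₀ adjacent to all vertices of A_i ∪ B_i for all i, with no other new edges. Then G₂ has radius exactly 2 and diameter exactly 3, and G₂ is 3-colorable if and only if G₁ is 3-colorable. -/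

import Mathlib

/-- The graph `G₂` obtained from `G₁` by adding, for each vertex `i` of `G₁`, `2k` new
vertices `A_i = {a_{i,1}, …, a_{i,k}}` (the vertices `Sum.inr (Sum.inl (i, p))`) and
`B_i = {b_{i,1}, …, b_{i,k}}` (the vertices `Sum.inr (Sum.inr (Sum.inl (i, q)))`), where
`a_{i,p}` is adjacent to `b_{i,q}` iff `p ≠ q`, the vertex `i` is adjacent to every vertex
of `A_i`, together with one further new vertex `v₀` (the vertex
`Sum.inr (Sum.inr (Sum.inr ()))`) adjacent to all vertices of `A_i ∪ B_i` for all `i`,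
and no other new edges. -/
def ampGraph {V : Type*} (G : SimpleGraph V) (k : ℕ) :
    SimpleGraph (V ⊕ ((V × Fin k) ⊕ ((V × Fin k) ⊕ Unit))) :=
  SimpleGraph.fromRel fun x y =>
    match x, y with
    | Sum.inl u, Sum.inl w => G.Adj u w
    | Sum.inl u, Sum.inr (Sum.inl p) => u = p.1
    | Sum.inr (Sum.inl p), Sum.inr (Sum.inr (Sum.inl q)) => p.1 = q.1 ∧ p.2 ≠ q.2
    | Sum.inr (Sum.inl _), Sum.inr (Sum.inr (Sum.inr _)) => True
    | Sum.inr (Sum.inr (Sum.inl _)), Sum.inr (Sum.inr (Sum.inr _)) => True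
    | _, _ => False

/-! The apex `v₀` is adjacent to all of `A_i ∪ B_i` and reaches `v_i` through `a_{i,1}`, so it
has eccentricity 2, and any two vertices not both in `G₁` are at distance at most 3 via `v₀`.
Two vertices of `G₁` have no common neighbour outside `G₁`, so a pair at distance 3 in `G₁`
stays at distance 3. A 3-colouring of `G₁` extends by giving `v₀` one colour and each
`A_i ∪ B_i` the two others, with `A_i` avoiding the colour of `v_i`. -/

open SimpleGraph Sum

theorem SimpleGraph.Reachable.dist_map_le {V W : Type*} {G : SimpleGraph V} {G' : SimpleGraph W}
    (f : G →g G') {u v : V} (h : G.Reachable u v) : G'.dist (f u) (f v) ≤ G.dist u v := by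
  obtain ⟨p, hp⟩ := h.exists_walk_length_eq_dist
  exact (dist_le (p.map f)).trans_eq (by rw [Walk.length_map, hp])

namespace ampGraph

variable {V : Type*} {G : SimpleGraph V} {k : ℕ}

@[simp] lemma adj_inl_inl {u w : V} : (ampGraph G k).Adj (inl u) (inl w) ↔ G.Adj u w := by
  simp only [ampGraph, fromRel_adj, ne_eq, inl.injEq]
  exact ⟨fun h => h.2.elim id .symm, fun h => ⟨h.ne, .inl h⟩⟩

@[simp] lemma adj_inl_a {u : V} {p : V × Fin k} :
    (ampGraph G k).Adj (inl u) (inr (inl p)) ↔ u = p.1 := by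
  simp [ampGraph]

@[simp] lemma adj_a_b {p q : V × Fin k} :
    (ampGraph G k).Adj (inr (inl p)) (inr (inr (inl q))) ↔ p.1 = q.1 ∧ p.2 ≠ q.2 := by
  simp [ampGraph]

@[simp] lemma adj_a_apex {p : V × Fin k} {t : Unit} :
    (ampGraph G k).Adj (inr (inl p)) (inr (inr (inr t))) := by
  simp [ampGraph]

@[simp] lemma adj_b_apex {q : V × Fin k} {t : Unit} :
    (ampGraph G k).Adj (inr (inr (inl q))) (inr (inr (inr t))) := by
  simp [ampGraph]

@[simp] lemma not_adj_inl_b {u : V} {q : V × Fin k} :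
    ¬ (ampGraph G k).Adj (inl u) (inr (inr (inl q))) := by
  simp [ampGraph]

@[simp] lemma not_adj_inl_apex {u : V} {t : Unit} :
    ¬ (ampGraph G k).Adj (inl u) (inr (inr (inr t))) := by
  simp [ampGraph]

def inlHom (G : SimpleGraph V) (k : ℕ) : G →g ampGraph G k :=
  ⟨inl, adj_inl_inl.mpr⟩

abbrev apex : V ⊕ ((V × Fin k) ⊕ ((V × Fin k) ⊕ Unit)) := inr (inr (inr ()))

lemma dist_apex_inr_le_one (x : (V × Fin k) ⊕ ((V × Fin k) ⊕ Unit)) :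
    (ampGraph G k).dist apex (inr x) ≤ 1 := by
  rcases x with p | q | ⟨⟩
  · exact dist_le (adj_a_apex (p := p)).symm.toWalk
  · exact dist_le (adj_b_apex (q := q)).symm.toWalk
  · exact dist_self.trans_le zero_le_one

lemma reachable_apex (hk : 0 < k) (x) : (ampGraph G k).Reachable apex x := by
  rcases x with i | p | q | ⟨⟩
  · exact (Adj.reachable (adj_a_apex (p := (i, ⟨0, hk⟩))).symm).trans
      (adj_inl_a.mpr rfl).symm.reachable
  · exact (adj_a_apex (p := p)).symm.reachable
  · exact (adj_b_apex (q := q)).symm.reachable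
  · rfl

lemma connected (hk : 0 < k) : (ampGraph G k).Connected :=
  (connected_iff_exists_forall_reachable _).mpr ⟨apex, reachable_apex hk⟩

lemma dist_apex_le_two (hk : 0 < k) (x) : (ampGraph G k).dist apex x ≤ 2 := by
  rcases x with i | x
  · exact dist_le ((adj_a_apex (p := (i, ⟨0, hk⟩))).symm.toWalk.concat (adj_inl_a.mpr rfl).symm)
  · exact (dist_apex_inr_le_one x).trans one_le_two

lemma exists_two_le_dist (hk : 0 < k) [Nonempty V] (x) :
    ∃ y, 2 ≤ (ampGraph G k).dist x y := by
  have far : ∀ y, x ≠ y → ¬ (ampGraph G k).Adj x y → 2 ≤ (ampGraph G k).dist x y :=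
    fun _ hne hadj => (connected hk).one_lt_dist_of_ne_of_not_adj hne hadj
  rcases x with i | p | q | ⟨⟩
  · exact ⟨_, far (inr (inr (inl (i, ⟨0, hk⟩)))) (by simp) not_adj_inl_b⟩
  · exact ⟨_, far (inr (inr (inl p))) (by simp) (by simp)⟩
  · exact ⟨_, far (inr (inl q)) (by simp) fun h => by simpa using h.symm⟩
  · exact ⟨_, far (inl (Classical.arbitrary V)) (by simp) fun h => not_adj_inl_apex h.symm⟩

lemma dist_le_three (hk : 0 < k) (hG : G.Connected) (hdiam : ∀ x y, G.dist x y ≤ 3) (x y) :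
    (ampGraph G k).dist x y ≤ 3 := by
  have via_apex : (ampGraph G k).dist x y ≤
      (ampGraph G k).dist apex x + (ampGraph G k).dist apex y := by
    rw [dist_comm (u := apex)]; exact (connected hk).dist_triangle
  rcases x with i | x
  · rcases y with j | y
    · exact ((hG i j).dist_map_le (inlHom G k)).trans (hdiam i j)
    · linarith [dist_apex_le_two (G := G) hk (inl i), dist_apex_inr_le_one (G := G) y]
  · linarith [dist_apex_le_two (G := G) hk y, dist_apex_inr_le_one (G := G) x]

lemma two_lt_edist_inl_inl {x y : V} (h : 2 < G.edist x y) :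
    2 < (ampGraph G k).edist (inl x) (inl y) := by
  obtain ⟨hne, hadj, hcommon⟩ := two_lt_edist_iff.mp h
  refine two_lt_edist_iff.mpr ⟨by simpa using hne, by simpa using hadj, ?_⟩
  ext z
  simp only [mem_commonNeighbors, Set.mem_empty_iff_false, iff_false, not_and]
  rcases z with w | p | q | ⟨⟩ <;> intro hx hy
  · exact (Set.eq_empty_iff_forall_notMem.mp hcommon) w
      ((G.mem_commonNeighbors).mpr ⟨adj_inl_inl.mp hx, adj_inl_inl.mp hy⟩)
  · exact hne ((adj_inl_a.mp hx).trans (adj_inl_a.mp hy).symm)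
  · exact not_adj_inl_b hx
  · exact not_adj_inl_apex hx

lemma dist_inl_inl_of_dist_eq_three (hk : 0 < k) {x y : V} (h : G.dist x y = 3) :
    (ampGraph G k).dist (inl x) (inl y) = 3 := by
  have hr : G.Reachable x y := Reachable.of_dist_ne_zero (by omega)
  have hfar : 2 < (ampGraph G k).edist (inl x) (inl y) :=
    two_lt_edist_inl_inl (by rw [← hr.coe_dist_eq_edist, h]; norm_num)
  rw [← ((connected hk).preconnected _ _).coe_dist_eq_edist] at hfar
  have : (ampGraph G k).dist (inl x) (inl y) ≤ G.dist x y := hr.dist_map_le (inlHom G k)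
  norm_cast at hfar
  omega

def extendColoring (c : G.Coloring (Fin 3)) : (ampGraph G k).Coloring (Fin 3) :=
  Coloring.mk
    (fun
      | inl u => c u
      | inr (inl p) => if c p.1 = 1 then 2 else 1
      | inr (inr (inl q)) => if c q.1 = 1 then 1 else 2
      | inr (inr (inr _)) => 0)
    (by
      rintro (u | p | q | ⟨⟩) (w | p' | q' | ⟨⟩) h <;>
        grind [ampGraph, fromRel_adj, c.valid])

lemma colorable_three_iff : (ampGraph G k).Colorable 3 ↔ G.Colorable 3 :=
  ⟨fun h => h.of_hom (inlHom G k), fun ⟨c⟩ => ⟨extendColoring c⟩⟩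

end ampGraph

theorem stmt_17_general {V : Type*} (G₁ : SimpleGraph V) (k : ℕ) (hk : 1 ≤ k)
    (hconn : G₁.Connected)
    (hdiam3 : ∀ x y : V, G₁.dist x y ≤ 3) (hex : ∃ x y : V, G₁.dist x y = 3) :
    ((∃ u, ∀ x, (ampGraph G₁ k).dist u x ≤ 2) ∧
     (∀ u, ∃ x, 2 ≤ (ampGraph G₁ k).dist u x)) ∧
    ((ampGraph G₁ k).Connected ∧
     (∀ x y, (ampGraph G₁ k).dist x y ≤ 3) ∧
     (∃ x y, (ampGraph G₁ k).dist x y = 3)) ∧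
    ((ampGraph G₁ k).Colorable 3 ↔ G₁.Colorable 3) := by
  obtain ⟨x, y, hxy⟩ := hex
  have : Nonempty V := ⟨x⟩
  exact ⟨⟨⟨_, ampGraph.dist_apex_le_two hk⟩, ampGraph.exists_two_le_dist hk⟩,
    ⟨ampGraph.connected hk, ampGraph.dist_le_three hk hconn hdiam3,
      ⟨_, _, ampGraph.dist_inl_inl_of_dist_eq_three hk hxy⟩⟩,
    ampGraph.colorable_three_iff⟩

/-- If `G₁` is a connected simple graph on finitely many vertices with
diameter exactly 3 and `k ≥ 1`, then the graph `G₂ = ampGraph G₁ k` has radius exactly 2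
and diameter exactly 3, and `G₂` is 3-colorable iff `G₁` is 3-colorable. -/
theorem stmt_17 {V : Type*} [Fintype V] (G₁ : SimpleGraph V) (k : ℕ) (hk : 1 ≤ k)
    (hconn : G₁.Connected)
    (hdiam3 : ∀ x y : V, G₁.dist x y ≤ 3) (hex : ∃ x y : V, G₁.dist x y = 3) :
    ((∃ u, ∀ x, (ampGraph G₁ k).dist u x ≤ 2) ∧
     (∀ u, ∃ x, 2 ≤ (ampGraph G₁ k).dist u x)) ∧
    ((ampGraph G₁ k).Connected ∧
     (∀ x y, (ampGraph G₁ k).dist x y ≤ 3) ∧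
     (∃ x y, (ampGraph G₁ k).dist x y = 3)) ∧
    ((ampGraph G₁ k).Colorable 3 ↔ G₁.Colorable 3) :=
  stmt_17_general G₁ k hk hconn hdiam3 hex
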